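/- arXiv:2312.07257 — 8 statements merged into one kernel-verified Lean document; each statement's English description precedes it below -/
import Mathlib

section
/- Let H and K be complex Hilbert spaces, let M ⊆ H and N ⊆ K be closed subspaces with orthogonal projections P_M ∈ B(H) and P_N ∈ B(K), and let T ∈ B(H,K). Then the following are equivalent: (i) there exist M_r ∈ B(H) and M_l ∈ B(K) with (1−P_M)M_r = M_r, M_l(1−P_N) = M_l, (1−P_N)T M_r = (1−P_N)T, and M_l T(1−P_M) = T(1−P_M); (ii) there exist C ∈ B(H) with C = (1−P_M) C P_M and (1−P_N) T C = (1−P_N) T P_M, and D ∈ B(K) with D = (1−P_N) D P_N and (1−P_M) T* D = (1−P_M) T* P_N. -/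
open ContinuousLinearMap

/-- Hilbert-space case of Proposition 4.2, equivalence (i) ⟺ (ii):
`T` is `(M,N)`-complementable iff the two block systems are solvable. -/
theorem complementable_iff_block_systems_solvable
    {H K : Type*} [NormedAddCommGroup H] [InnerProductSpace ℂ H] [CompleteSpace H]
    [NormedAddCommGroup K] [InnerProductSpace ℂ K] [CompleteSpace K]
    (M : Submodule ℂ H) (N : Submodule ℂ K)
    (P_M : H →L[ℂ] H) (P_N : K →L[ℂ] K)
    -- `P_M` is the orthogonal projection of `H` onto the (closed) subspace `M`
    (hPM_sa : ContinuousLinearMap.adjoint P_M = P_M)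
    (hPM_mem : ∀ x : H, P_M x ∈ M) (hPM_fix : ∀ x ∈ M, P_M x = x)
    -- `P_N` is the orthogonal projection of `K` onto the (closed) subspace `N`
    (hPN_sa : ContinuousLinearMap.adjoint P_N = P_N)
    (hPN_mem : ∀ y : K, P_N y ∈ N) (hPN_fix : ∀ y ∈ N, P_N y = y)
    (T : H →L[ℂ] K) :
    (∃ (Mr : H →L[ℂ] H) (Ml : K →L[ℂ] K),
      (1 - P_M).comp Mr = Mr ∧ Ml.comp (1 - P_N) = Ml ∧
      ((1 - P_N).comp T).comp Mr = (1 - P_N).comp T ∧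
      (Ml.comp T).comp (1 - P_M) = T.comp (1 - P_M)) ↔
    ((∃ C : H →L[ℂ] H,
        C = ((1 - P_M).comp C).comp P_M ∧
        ((1 - P_N).comp T).comp C = ((1 - P_N).comp T).comp P_M) ∧
      (∃ D : K →L[ℂ] K,
        D = ((1 - P_N).comp D).comp P_N ∧
        ((1 - P_M).comp (ContinuousLinearMap.adjoint T)).comp D =
          ((1 - P_M).comp (ContinuousLinearMap.adjoint T)).comp P_N)) := by
  have hPM_idem : P_M.comp P_M = P_M := by
    ext x; exact hPM_fix _ (hPM_mem x)
  have hPN_idem : P_N.comp P_N = P_N := by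
    ext y; exact hPN_fix _ (hPN_mem y)
  have hQM_sa : ContinuousLinearMap.adjoint (1 - P_M) = 1 - P_M := by
    rw [map_sub, hPM_sa]
    congr 1
    simp [ContinuousLinearMap.one_def, ContinuousLinearMap.adjoint_id]
  have hQN_sa : ContinuousLinearMap.adjoint (1 - P_N) = 1 - P_N := by
    rw [map_sub, hPN_sa]
    congr 1
    simp [ContinuousLinearMap.one_def, ContinuousLinearMap.adjoint_id]
  have hQM_idem : (1 - P_M).comp (1 - P_M) = 1 - P_M := by
    ext x
    simp [ContinuousLinearMap.sub_apply, map_sub, hPM_fix _ (hPM_mem x)]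
  have hQN_idem : (1 - P_N).comp (1 - P_N) = 1 - P_N := by
    ext y
    simp [ContinuousLinearMap.sub_apply, map_sub, hPN_fix _ (hPN_mem y)]
  constructor
  · rintro ⟨Mr, Ml, hMr, hMl, h1, h2⟩
    constructor
    · refine ⟨Mr.comp P_M, ?_, ?_⟩
      · calc Mr.comp P_M = ((1 - P_M).comp Mr).comp (P_M.comp P_M) := by
              rw [hMr, hPM_idem]
          _ = ((1 - P_M).comp (Mr.comp P_M)).comp P_M := by
              simp only [comp_assoc]
      · rw [← comp_assoc, h1]
    · -- adjoint facts
      have hMl' : (1 - P_N).comp (ContinuousLinearMap.adjoint Ml)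
          = ContinuousLinearMap.adjoint Ml := by
        conv_rhs => rw [← hMl]
        rw [adjoint_comp, hQN_sa]
      have h2' : ((1 - P_M).comp (ContinuousLinearMap.adjoint T)).comp
            (ContinuousLinearMap.adjoint Ml)
          = (1 - P_M).comp (ContinuousLinearMap.adjoint T) := by
        have := congrArg ContinuousLinearMap.adjoint h2
        rwa [adjoint_comp, adjoint_comp, adjoint_comp, hQM_sa, ← comp_assoc] at this
      refine ⟨(ContinuousLinearMap.adjoint Ml).comp P_N, ?_, ?_⟩
      · calc (ContinuousLinearMap.adjoint Ml).comp P_N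
            = ((1 - P_N).comp (ContinuousLinearMap.adjoint Ml)).comp (P_N.comp P_N) := by
              rw [hMl', hPN_idem]
          _ = ((1 - P_N).comp ((ContinuousLinearMap.adjoint Ml).comp P_N)).comp P_N := by
              simp only [comp_assoc]
      · rw [← comp_assoc, h2']
  · rintro ⟨⟨C, hC1, hC2⟩, ⟨D, hD1, hD2⟩⟩
    have hQC : (1 - P_M).comp C = C := by
      conv_lhs => rw [hC1]
      rw [← comp_assoc, ← comp_assoc, hQM_idem, ← hC1]
    -- adjoint of D facts
    have hD1' : ContinuousLinearMap.adjoint D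
        = P_N.comp ((ContinuousLinearMap.adjoint D).comp (1 - P_N)) := by
      conv_lhs => rw [hD1]
      rw [adjoint_comp, adjoint_comp, hPN_sa, hQN_sa]
    have hD2' : (ContinuousLinearMap.adjoint D).comp (T.comp (1 - P_M))
        = P_N.comp (T.comp (1 - P_M)) := by
      have := congrArg ContinuousLinearMap.adjoint hD2
      rw [adjoint_comp, adjoint_comp, adjoint_comp, adjoint_comp, hQM_sa, hPN_sa,
        ContinuousLinearMap.adjoint_adjoint] at this
      exact this
    have hD'Q : (ContinuousLinearMap.adjoint D).comp (1 - P_N)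
        = ContinuousLinearMap.adjoint D := by
      conv_rhs => rw [hD1']
      conv_lhs => rw [hD1']
      rw [comp_assoc, comp_assoc, hQN_idem]
    refine ⟨(1 - P_M) + C, (1 - P_N) + ContinuousLinearMap.adjoint D, ?_, ?_, ?_, ?_⟩
    · rw [comp_add, hQM_idem, hQC]
    · rw [add_comp, hQN_idem, hD'Q]
    · rw [comp_add, hC2, ← comp_add, sub_add_cancel]
      ext x; rfl
    · rw [add_comp, add_comp, comp_assoc, comp_assoc, hD2', ← add_comp, sub_add_cancel]
      ext x; rfl
end

section
/- Let H and K be complex Hilbert spaces, let M ⊆ H and N ⊆ K be closed subspaces with orthogonal projections P_M ∈ B(H) and P_N ∈ B(K), and let T ∈ B(H,K). Then the following are equivalent: (i) there exist M_r ∈ B(H) and M_l ∈ B(K) with (1−P_M)M_r = M_r, M_l(1−P_N) = M_l, (1−P_N)T M_r = (1−P_N)T, and M_l T(1−P_M) = T(1−P_M); (iii) there exist idempotents P ∈ B(H) (P² = P) and Q ∈ B(K) (Q² = Q) such that range(P*) = M, range(T∘P) ⊆ N, range(Q) = N, and range((Q∘T)*) ⊆ M. -/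
/-!
Writing `Mr = 1 - P'` and `Ml = 1 - Q'`, condition (i) says `P_M P' = P_M`, `Q' P_N = P_N`,
`P_N T P' = T P'` and `Q' T P_M = Q' T`. An idempotent `e` satisfies `e A = A` iff
`range A ⊆ range e`, and for the self-adjoint `P_M` this dualises to `A P_M = A` iff
`range A* ⊆ M`; so the last two conditions are exactly those of (iii). The idempotents of (iii)
satisfy the first two conditions, and conversely `P' P_M` and `P_N Q'` are idempotents with the
required ranges.
-/

namespace IsIdempotentElem

variable {S : Type*} [Semigroup S] {p x : S}

theorem mul_left_of_mul_eq_self (hp : IsIdempotentElem p) (h : p * x = p) :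
    IsIdempotentElem (x * p) := by
  rw [IsIdempotentElem, mul_assoc, ← mul_assoc p, h, hp.eq]

theorem mul_right_of_mul_eq_self (hp : IsIdempotentElem p) (h : x * p = p) :
    IsIdempotentElem (p * x) := by
  rw [IsIdempotentElem, ← mul_assoc, mul_assoc p, h, hp.eq]

end IsIdempotentElem

namespace ContinuousLinearMap

open scoped InnerProduct

section Ring

variable {R E F G : Type*} [Ring R] [TopologicalSpace E] [AddCommGroup E] [Module R E]
  [TopologicalSpace F] [AddCommGroup F] [Module R F] [TopologicalSpace G] [AddCommGroup G]
  [Module R G]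

theorem comp_eq_self_iff_one_sub_comp_eq_zero [IsTopologicalAddGroup F] {a : F →L[R] F}
    {b : E →L[R] F} : a ∘L b = b ↔ (1 - a) ∘L b = 0 := by
  rw [sub_comp, one_def, id_comp, sub_eq_zero, eq_comm]

theorem comp_eq_self_iff_comp_one_sub_eq_zero [IsTopologicalAddGroup E] [IsTopologicalAddGroup G]
    {a : E →L[R] E} {b : E →L[R] G} : b ∘L a = b ↔ b ∘L (1 - a) = 0 := by
  rw [comp_sub, one_def, comp_id, sub_eq_zero, eq_comm]

theorem exists_complements_iff [IsTopologicalAddGroup E] [IsTopologicalAddGroup F]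
    (p : E →L[R] E) (q : F →L[R] F) (T : E →L[R] F) :
    (∃ (Mr : E →L[R] E) (Ml : F →L[R] F),
      (1 - p) ∘L Mr = Mr ∧ Ml ∘L (1 - q) = Ml ∧
      ((1 - q) ∘L T) ∘L Mr = (1 - q) ∘L T ∧ (Ml ∘L T) ∘L (1 - p) = T ∘L (1 - p)) ↔
    ∃ (P : E →L[R] E) (Q : F →L[R] F),
      p ∘L P = p ∧ Q ∘L q = q ∧ q ∘L (T ∘L P) = T ∘L P ∧ (Q ∘L T) ∘L p = Q ∘L T := by
  rw [(Equiv.subLeft (1 : E →L[R] E)).symm.exists_congr_left]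
  refine exists_congr fun P ↦ ?_
  rw [(Equiv.subLeft (1 : F →L[R] F)).symm.exists_congr_left]
  refine exists_congr fun Q ↦ ?_
  simp only [Equiv.symm_symm, Equiv.subLeft_apply]
  refine and_congr ?_ (and_congr ?_ (and_congr ?_ ?_))
  · rw [comp_eq_self_iff_one_sub_comp_eq_zero, sub_sub_cancel,
      ← comp_eq_self_iff_comp_one_sub_eq_zero]
  · rw [comp_eq_self_iff_comp_one_sub_eq_zero, sub_sub_cancel,
      ← comp_eq_self_iff_one_sub_comp_eq_zero]
  · rw [comp_eq_self_iff_comp_one_sub_eq_zero, sub_sub_cancel, comp_assoc,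
      ← comp_eq_self_iff_one_sub_comp_eq_zero]
  · rw [comp_assoc, comp_eq_self_iff_one_sub_comp_eq_zero, sub_sub_cancel, ← comp_assoc,
      ← comp_eq_self_iff_comp_one_sub_eq_zero]

theorem IsIdempotentElem.comp_eq_self_iff_range_le {e : F →L[R] F} (he : IsIdempotentElem e)
    (a : E →L[R] F) : e ∘L a = a ↔ a.range ≤ e.range := by
  rw [← LinearMap.IsIdempotentElem.comp_eq_right_iff (IsIdempotentElem.toLinearMap he),
    ← toLinearMap_comp, coe_inj]

theorem range_comp_eq_of_comp_comp_eq {a : F →L[R] G} {b : G →L[R] F} (h : a ∘L b ∘L a = a) :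
    (a ∘L b).range = a.range :=
  le_antisymm (LinearMap.range_comp_le_range _ _) <| by
    conv_lhs => rw [← h]
    exact LinearMap.range_comp_le_range (a : F →ₗ[R] G) (a ∘L b : G →ₗ[R] G)

end Ring

section InnerProductSpace

variable {𝕜 E F : Type*} [RCLike 𝕜] [NormedAddCommGroup E] [InnerProductSpace 𝕜 E]
  [CompleteSpace E] [NormedAddCommGroup F] [InnerProductSpace 𝕜 F] [CompleteSpace F]
  {p : E →L[𝕜] E} {q : F →L[𝕜] F}

theorem IsStarProjection.comp_eq_self_iff_range_adjoint_le (hp : IsStarProjection p)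
    (a : E →L[𝕜] F) : a ∘L p = a ↔ (a†).range ≤ p.range := by
  rw [← IsIdempotentElem.comp_eq_self_iff_range_le hp.isIdempotentElem,
    ← adjoint.injective.eq_iff, adjoint_comp, hp.isSelfAdjoint.adjoint_eq]

theorem exists_comp_eq_self_iff_exists_idempotents (hp : IsStarProjection p)
    (hq : IsIdempotentElem q) (T : E →L[𝕜] F) :
    (∃ (P : E →L[𝕜] E) (Q : F →L[𝕜] F),
      p ∘L P = p ∧ Q ∘L q = q ∧ q ∘L (T ∘L P) = T ∘L P ∧ (Q ∘L T) ∘L p = Q ∘L T) ↔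
    ∃ (P : E →L[𝕜] E) (Q : F →L[𝕜] F), IsIdempotentElem P ∧ IsIdempotentElem Q ∧
      (P†).range = p.range ∧ (T ∘L P).range ≤ q.range ∧ Q.range = q.range ∧
      ((Q ∘L T)†).range ≤ p.range := by
  have hp_adj : p† = p := hp.isSelfAdjoint.adjoint_eq
  constructor
  · rintro ⟨P, Q, hpP, hQq, hqTP, hQTp⟩
    refine ⟨P ∘L p, q ∘L Q, hp.isIdempotentElem.mul_left_of_mul_eq_self hpP,
      hq.mul_right_of_mul_eq_self hQq, ?_, ?_, range_comp_eq_of_comp_comp_eq ?_, ?_⟩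
    · rw [adjoint_comp, hp_adj]
      refine range_comp_eq_of_comp_comp_eq ?_
      have hpPp : p ∘L P ∘L p = p := by rw [← comp_assoc, hpP]; exact hp.isIdempotentElem
      simpa only [adjoint_comp, hp_adj, comp_assoc] using congrArg adjoint hpPp
    · have hTP : (T ∘L P).range ≤ q.range :=
        (IsIdempotentElem.comp_eq_self_iff_range_le hq _).mp hqTP
      rw [← comp_assoc]
      exact (LinearMap.range_comp_le_range _ _).trans hTP
    · rw [hQq]; exact hq
    · rw [← IsStarProjection.comp_eq_self_iff_range_adjoint_le hp]
      simp only [comp_assoc] at hQTp ⊢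
      rw [hQTp]
  · rintro ⟨P, Q, hP, hQ, hPp, hTPq, hQq, hQTp⟩
    refine ⟨P, Q, ?_, (IsIdempotentElem.comp_eq_self_iff_range_le hQ q).mpr hQq.ge,
      (IsIdempotentElem.comp_eq_self_iff_range_le hq _).mpr hTPq,
      (IsStarProjection.comp_eq_self_iff_range_adjoint_le hp _).mpr hQTp⟩
    have hPp' : P† ∘L p = p :=
      (IsIdempotentElem.comp_eq_self_iff_range_le hP.star p).mpr hPp.ge
    rw [← adjoint.injective.eq_iff, adjoint_comp, hp_adj, hPp']

end InnerProductSpace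

end ContinuousLinearMap

open ContinuousLinearMap

theorem complementable_iff_idempotents_general
    {H K : Type*} [NormedAddCommGroup H] [InnerProductSpace ℂ H] [CompleteSpace H]
    [NormedAddCommGroup K] [InnerProductSpace ℂ K] [CompleteSpace K]
    (M : Submodule ℂ H) (N : Submodule ℂ K)
    (P_M : H →L[ℂ] H) (P_N : K →L[ℂ] K)
    -- `P_M` is the orthogonal projection of `H` onto the (closed) subspace `M`
    (hPM_sa : ContinuousLinearMap.adjoint P_M = P_M)
    (hPM_mem : ∀ x : H, P_M x ∈ M) (hPM_fix : ∀ x ∈ M, P_M x = x)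
    -- `P_N` is the orthogonal projection of `K` onto the (closed) subspace `N`
    (hPN_mem : ∀ y : K, P_N y ∈ N) (hPN_fix : ∀ y ∈ N, P_N y = y)
    (T : H →L[ℂ] K) :
    (∃ (Mr : H →L[ℂ] H) (Ml : K →L[ℂ] K),
      (1 - P_M).comp Mr = Mr ∧ Ml.comp (1 - P_N) = Ml ∧
      ((1 - P_N).comp T).comp Mr = (1 - P_N).comp T ∧
      (Ml.comp T).comp (1 - P_M) = T.comp (1 - P_M)) ↔
    (∃ (P : H →L[ℂ] H) (Q : K →L[ℂ] K),
      P.comp P = P ∧ Q.comp Q = Q ∧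
      Set.range (ContinuousLinearMap.adjoint P) = (M : Set H) ∧
      Set.range (T.comp P) ⊆ (N : Set K) ∧
      Set.range Q = (N : Set K) ∧
      Set.range (ContinuousLinearMap.adjoint (Q.comp T)) ⊆ (M : Set H)) := by
  have hM : LinearMap.IsProj M (P_M : H →ₗ[ℂ] H) := ⟨hPM_mem, hPM_fix⟩
  have hN : LinearMap.IsProj N (P_N : K →ₗ[ℂ] K) := ⟨hPN_mem, hPN_fix⟩
  have hPM : IsStarProjection P_M :=
    ⟨isIdempotentElem_toLinearMap_iff.mp hM.isIdempotentElem, hPM_sa⟩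
  have hPN : IsIdempotentElem P_N := isIdempotentElem_toLinearMap_iff.mp hN.isIdempotentElem
  rw [exists_complements_iff, exists_comp_eq_self_iff_exists_idempotents hPM hPN, ← hM.range,
    ← hN.range]
  simp only [← SetLike.coe_subset_coe, ← SetLike.coe_set_eq, LinearMap.coe_range, coe_coe]
  rfl

/-- Hilbert-space case of Proposition 4.2, equivalence (i) ⟺ (iii):
`T` is `(M,N)`-complementable iff there are suitable idempotents `P` and `Q`. -/
theorem complementable_iff_idempotents
    {H K : Type*} [NormedAddCommGroup H] [InnerProductSpace ℂ H] [CompleteSpace H]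
    [NormedAddCommGroup K] [InnerProductSpace ℂ K] [CompleteSpace K]
    (M : Submodule ℂ H) (N : Submodule ℂ K)
    (P_M : H →L[ℂ] H) (P_N : K →L[ℂ] K)
    -- `P_M` is the orthogonal projection of `H` onto the (closed) subspace `M`
    (hPM_sa : ContinuousLinearMap.adjoint P_M = P_M)
    (hPM_mem : ∀ x : H, P_M x ∈ M) (hPM_fix : ∀ x ∈ M, P_M x = x)
    -- `P_N` is the orthogonal projection of `K` onto the (closed) subspace `N`
    (hPN_sa : ContinuousLinearMap.adjoint P_N = P_N)
    (hPN_mem : ∀ y : K, P_N y ∈ N) (hPN_fix : ∀ y ∈ N, P_N y = y)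
    (T : H →L[ℂ] K) :
    (∃ (Mr : H →L[ℂ] H) (Ml : K →L[ℂ] K),
      (1 - P_M).comp Mr = Mr ∧ Ml.comp (1 - P_N) = Ml ∧
      ((1 - P_N).comp T).comp Mr = (1 - P_N).comp T ∧
      (Ml.comp T).comp (1 - P_M) = T.comp (1 - P_M)) ↔
    (∃ (P : H →L[ℂ] H) (Q : K →L[ℂ] K),
      P.comp P = P ∧ Q.comp Q = Q ∧
      Set.range (ContinuousLinearMap.adjoint P) = (M : Set H) ∧
      Set.range (T.comp P) ⊆ (N : Set K) ∧
      Set.range Q = (N : Set K) ∧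
      Set.range (ContinuousLinearMap.adjoint (Q.comp T)) ⊆ (M : Set H)) :=
  complementable_iff_idempotents_general M N P_M P_N hPM_sa hPM_mem hPM_fix hPN_mem hPN_fix T
end

section
/- Let H, K, G, G' be complex Hilbert spaces, let A ∈ B(H,K), and let V_A ∈ B(H,K) be the unique operator with |A*|^{1/2} V_A = A and range V_A ⊆ closure(range A). Let C ∈ B(G,H) and D ∈ B(G',K), and set T₂₁ = A ∘ C and T₁₂* = A* ∘ D. Then the reduced solutions E of V_A Y = T₂₁ and F of |A|^{1/2}Y = T₁₂* exist, and F*∘E = D* ∘ A ∘ C. -/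
/-!
Write `Q = |A|^{1/2}` and `P = |A*|^{1/2}`. Since `A` intertwines `A*A` with `AA*`, it intertwines
their continuous functional calculi, so `A Q = P A`. Hence `P (V_A Q - A) = 0`, and `V_A Q - A`
lies in the closure of the range of `A`, on which `P` is injective because
`ker P = ker A* = (ran A)ᗮ`; so `V_A Q = A`. The reduced solutions are `E = Q C` and `F = V_A* D`:
`V_A E = A C`, `Q F = (V_A Q)* D = A* D` and `F* E = D* V_A Q C = D* A C`, while the range
conditions follow from `ker V_A = ker A = ker Q`.
-/

/-- `|T|^α = (T*T)^{α/2}` defined via the continuous functional calculus. -/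
noncomputable def absPow {H K : Type*} [NormedAddCommGroup H] [InnerProductSpace ℂ H]
    [NormedAddCommGroup K] [InnerProductSpace ℂ K] [CompleteSpace H] [CompleteSpace K]
    (T : H →L[ℂ] K) (α : ℝ) : H →L[ℂ] H :=
  CFC.rpow ((ContinuousLinearMap.adjoint T).comp T) (α / 2)

/-- `D` is the reduced solution of the system `A X = C`. -/
def IsReducedSolution {E H K : Type*}
    [NormedAddCommGroup E] [InnerProductSpace ℂ E] [CompleteSpace E]
    [NormedAddCommGroup H] [InnerProductSpace ℂ H] [CompleteSpace H]
    [NormedAddCommGroup K] [InnerProductSpace ℂ K] [CompleteSpace K]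
    (A : H →L[ℂ] K) (C : E →L[ℂ] K) (D : E →L[ℂ] H) : Prop :=
  A.comp D = C ∧ Set.range D ⊆ closure (Set.range (ContinuousLinearMap.adjoint A))

open ContinuousLinearMap InnerProduct

section

variable {H K K' : Type*}
  [NormedAddCommGroup H] [InnerProductSpace ℂ H] [CompleteSpace H]
  [NormedAddCommGroup K] [InnerProductSpace ℂ K] [CompleteSpace K]
  [NormedAddCommGroup K'] [InnerProductSpace ℂ K'] [CompleteSpace K']

namespace ContinuousLinearMap

lemma comp_cfcHomSuperset_of_comp_eq {T : H →L[ℂ] H} {S : K →L[ℂ] K}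
    (hT : IsSelfAdjoint T) (hS : IsSelfAdjoint S) {s : Set ℝ} [CompactSpace s]
    (hTs : spectrum ℝ T ⊆ s) (hSs : spectrum ℝ S ⊆ s)
    (X : H →L[ℂ] K) (h : X ∘L T = S ∘L X) (g : C(s, ℝ)) :
    X ∘L cfcHomSuperset hT hTs g = cfcHomSuperset hS hSs g ∘L X := by
  induction g using ContinuousMap.induction_on_of_compact with
  | const r =>
    have hr : ContinuousMap.const s r = algebraMap ℝ C(s, ℝ) r := rfl
    ext x
    simp [hr, Algebra.algebraMap_eq_smul_one]
  | id => simpa only [cfcHomSuperset_id] using h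
  | star_id => simpa only [star_trivial, cfcHomSuperset_id] using h
  | add f g hf hg => simp only [map_add, comp_add, add_comp, hf, hg]
  | mul f g hf hg =>
    simp only [map_mul, mul_def, ← comp_assoc, hf]
    rw [comp_assoc, hg, comp_assoc]
  | frequently f hf =>
    refine (isClosed_eq ?_ ?_).closure_subset (mem_closure_iff_frequently.mpr hf)
    · exact continuous_const.clm_comp (cfcHomSuperset_continuous hT hTs)
    · exact (cfcHomSuperset_continuous hS hSs).clm_comp continuous_const

lemma comp_cfc_of_comp_eq {T : H →L[ℂ] H} {S : K →L[ℂ] K}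
    (hT : IsSelfAdjoint T) (hS : IsSelfAdjoint S) (X : H →L[ℂ] K) (h : X ∘L T = S ∘L X)
    (f : ℝ → ℝ) (hf : ContinuousOn f (spectrum ℝ T ∪ spectrum ℝ S)) :
    X ∘L cfc f T = cfc f S ∘L X := by
  set s : Set ℝ := spectrum ℝ T ∪ spectrum ℝ S
  have : CompactSpace s :=
    isCompact_iff_compactSpace.mp ((spectrum.isCompact T).union (spectrum.isCompact S))
  have hfT : ContinuousOn f (spectrum ℝ T) := hf.mono Set.subset_union_left
  have hfS : ContinuousOn f (spectrum ℝ S) := hf.mono Set.subset_union_right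
  have key := comp_cfcHomSuperset_of_comp_eq hT hS Set.subset_union_left Set.subset_union_right
    X h ⟨_, hf.domRestrict⟩
  rw [cfc_apply f T hT hfT, cfc_apply f S hS hfS]
  exact key

lemma closure_range_adjoint (X : H →L[ℂ] K) : closure (Set.range (X†)) = (X.kerᗮ : Set H) := by
  rw [orthogonal_ker, Submodule.topologicalClosure_coe, LinearMap.coe_range, coe_coe]

lemma eq_zero_of_mem_closure_range_of_adjoint_apply_eq_zero (A : H →L[ℂ] K) {y : K}
    (hy : y ∈ closure (Set.range A)) (h : (A†) y = 0) : y = 0 := by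
  rw [← adjoint_adjoint A, closure_range_adjoint] at hy
  simpa using (Submodule.inf_orthogonal_eq_bot (A†).ker).le ⟨h, hy⟩

lemma range_adjoint_subset_closure_range_adjoint {X : H →L[ℂ] K} {Y : H →L[ℂ] K'}
    (h : X.ker ≤ Y.ker) : Set.range (Y†) ⊆ closure (Set.range (X†)) := by
  rw [closure_range_adjoint]
  exact subset_closure.trans ((closure_range_adjoint Y).subset.trans (Submodule.orthogonal_le h))

lemma _root_.IsSelfAdjoint.ker_sq {T : H →L[ℂ] H} (hT : IsSelfAdjoint T) :
    (T ^ 2).ker = T.ker := by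
  simpa only [isSelfAdjoint_iff'.mp hT, ← mul_def, ← pow_two] using ker_adjoint_comp_self T

lemma adjoint_comp_self_nonneg (A : H →L[ℂ] K) : 0 ≤ A† ∘L A :=
  (nonneg_iff_isPositive _).mpr (isPositive_adjoint_comp_self A)

end ContinuousLinearMap

lemma absPow_nonneg (A : H →L[ℂ] K) (α : ℝ) : 0 ≤ absPow A α := CFC.rpow_nonneg

lemma adjoint_absPow (A : H →L[ℂ] K) (α : ℝ) : (absPow A α)† = absPow A α :=
  isSelfAdjoint_iff'.mp (IsSelfAdjoint.of_nonneg (absPow_nonneg A α))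

lemma comp_absPow (A : H →L[ℂ] K) {α : ℝ} (hα : 0 ≤ α) :
    A ∘L absPow A α = absPow (A†) α ∘L A := by
  have hT : 0 ≤ A† ∘L A := adjoint_comp_self_nonneg A
  have hS : 0 ≤ A ∘L A† := by simpa using adjoint_comp_self_nonneg (A†)
  rw [absPow, absPow, adjoint_adjoint, CFC.rpow_eq_pow, CFC.rpow_eq_pow,
    CFC.rpow_eq_cfc_real hT, CFC.rpow_eq_cfc_real hS]
  refine comp_cfc_of_comp_eq hT.isSelfAdjoint hS.isSelfAdjoint A (comp_assoc _ _ _).symm _ ?_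
  exact (Real.continuous_rpow_const (by linarith)).continuousOn

lemma absPow_half_pow_four (A : H →L[ℂ] K) : absPow A (1 / 2) ^ 4 = A† ∘L A := by
  have hT : 0 ≤ A† ∘L A := adjoint_comp_self_nonneg A
  rw [absPow, CFC.rpow_eq_pow, ← CFC.rpow_natCast _ 4 CFC.rpow_nonneg,
    CFC.rpow_rpow_of_exponent_nonneg _ _ _ (by norm_num) (by norm_num) hT]
  norm_num [CFC.rpow_one _ hT]

lemma ker_absPow_half (A : H →L[ℂ] K) : (absPow A (1 / 2)).ker = A.ker := by
  have hQ : IsSelfAdjoint (absPow A (1 / 2)) := IsSelfAdjoint.of_nonneg (absPow_nonneg A _)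
  rw [← hQ.ker_sq, ← (hQ.pow 2).ker_sq, ← pow_mul, absPow_half_pow_four, ker_adjoint_comp_self]

lemma eq_zero_of_absPow_adjoint_apply_eq_zero (A : H →L[ℂ] K) {y : K}
    (hy : y ∈ closure (Set.range A)) (h : absPow (A†) (1 / 2) y = 0) : y = 0 := by
  have hy' : y ∈ (A†).ker := by rw [← ker_absPow_half]; exact h
  exact eq_zero_of_mem_closure_range_of_adjoint_apply_eq_zero A hy hy'

lemma comp_absPow_half_eq_of_absPow_adjoint_comp_eq {A V : H →L[ℂ] K}
    (hV₁ : absPow (A†) (1 / 2) ∘L V = A) (hV₂ : Set.range V ⊆ closure (Set.range A)) :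
    V ∘L absPow A (1 / 2) = A := by
  ext x
  refine sub_eq_zero.mp (eq_zero_of_absPow_adjoint_apply_eq_zero A ?_ ?_)
  · have hA : closure (Set.range A) =
        ((LinearMap.range (A : H →ₗ[ℂ] K)).topologicalClosure : Set K) := by
      rw [Submodule.topologicalClosure_coe, LinearMap.coe_range, coe_coe]
    rw [hA] at hV₂ ⊢
    exact sub_mem (hV₂ ⟨_, rfl⟩) (subset_closure ⟨x, rfl⟩)
  · rw [map_sub, comp_apply V, ← comp_apply (absPow _ _) V, hV₁, ← comp_apply A,
      comp_absPow A (by norm_num), comp_apply, sub_self]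

lemma ker_eq_of_absPow_adjoint_comp_eq {A V : H →L[ℂ] K}
    (hV₁ : absPow (A†) (1 / 2) ∘L V = A) (hV₂ : Set.range V ⊆ closure (Set.range A)) :
    V.ker = A.ker := by
  have hPV : ∀ x, absPow (A†) (1 / 2) (V x) = A x := fun x ↦ congr($hV₁ x)
  ext x
  simp only [LinearMap.mem_ker, coe_coe]
  refine ⟨fun hx ↦ by rw [← hPV, hx, map_zero], fun hx ↦ ?_⟩
  exact eq_zero_of_absPow_adjoint_apply_eq_zero A (hV₂ ⟨x, rfl⟩) (by rw [hPV, hx])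

end

theorem complementable_implies_weakly_complementable_general
    {H K G G' : Type*}
    [NormedAddCommGroup H] [InnerProductSpace ℂ H] [CompleteSpace H]
    [NormedAddCommGroup K] [InnerProductSpace ℂ K] [CompleteSpace K]
    [NormedAddCommGroup G] [InnerProductSpace ℂ G] [CompleteSpace G]
    [NormedAddCommGroup G'] [InnerProductSpace ℂ G'] [CompleteSpace G']
    (A : H →L[ℂ] K)
    -- `V_A` is the (unique) operator with `|A*|^{1/2} V_A = A` and `R(V_A) ⊆ closure R(A)`
    (V_A : H →L[ℂ] K)
    (hV₁ : (absPow (ContinuousLinearMap.adjoint A) (1/2)).comp V_A = A)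
    (hV₂ : Set.range V_A ⊆ closure (Set.range A))
    (C : G →L[ℂ] H) (D : G' →L[ℂ] K)
    (T₂₁ : G →L[ℂ] K) (T₁₂s : G' →L[ℂ] H)
    (hT₂₁ : T₂₁ = A.comp C) (hT₁₂s : T₁₂s = (ContinuousLinearMap.adjoint A).comp D) :
    ∃ (E : G →L[ℂ] H) (F : G' →L[ℂ] H),
      IsReducedSolution V_A T₂₁ E ∧
      IsReducedSolution (absPow A (1/2)) T₁₂s F ∧
      (ContinuousLinearMap.adjoint F).comp E =
        ((ContinuousLinearMap.adjoint D).comp A).comp C := by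
  have hVQ : V_A ∘L absPow A (1 / 2) = A := comp_absPow_half_eq_of_absPow_adjoint_comp_eq hV₁ hV₂
  have hkerV : V_A.ker = A.ker := ker_eq_of_absPow_adjoint_comp_eq hV₁ hV₂
  have hkerQ : (absPow A (1 / 2)).ker = A.ker := ker_absPow_half A
  refine ⟨absPow A (1 / 2) ∘L C, V_A† ∘L D, ⟨?_, ?_⟩, ⟨?_, ?_⟩, ?_⟩
  · rw [hT₂₁, ← comp_assoc, hVQ]
  · rw [coe_comp, ← adjoint_absPow]
    exact (Set.range_comp_subset_range _ _).trans
      (range_adjoint_subset_closure_range_adjoint (hkerV.trans hkerQ.symm).le)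
  · rw [hT₁₂s, ← comp_assoc, ← adjoint_absPow, ← adjoint_comp, hVQ]
  · rw [coe_comp]
    exact (Set.range_comp_subset_range _ _).trans
      (range_adjoint_subset_closure_range_adjoint (hkerQ.trans hkerV.symm).le)
  · rw [adjoint_comp, adjoint_adjoint, comp_assoc, ← comp_assoc V_A, hVQ, comp_assoc]

/-- Proposition 5.5 (Hilbert-space case): if `T₂₁ = A C` and `T₁₂* = A* D`, then the reduced
solutions `E` of `V_A Y = T₂₁` and `F` of `|A|^{1/2} Y = T₁₂*` exist, and `F*E = D* A C`. -/
theorem complementable_implies_weakly_complementable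
    {H K G G' : Type*}
    [NormedAddCommGroup H] [InnerProductSpace ℂ H] [CompleteSpace H]
    [NormedAddCommGroup K] [InnerProductSpace ℂ K] [CompleteSpace K]
    [NormedAddCommGroup G] [InnerProductSpace ℂ G] [CompleteSpace G]
    [NormedAddCommGroup G'] [InnerProductSpace ℂ G'] [CompleteSpace G']
    (A : H →L[ℂ] K)
    -- `V_A` is the (unique) operator with `|A*|^{1/2} V_A = A` and `R(V_A) ⊆ closure R(A)`
    (V_A : H →L[ℂ] K)
    (hV₁ : (absPow (ContinuousLinearMap.adjoint A) (1/2)).comp V_A = A)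
    (hV₂ : Set.range V_A ⊆ closure (Set.range A))
    (hVuniq : ∀ W : H →L[ℂ] K,
      (absPow (ContinuousLinearMap.adjoint A) (1/2)).comp W = A →
      Set.range W ⊆ closure (Set.range A) → W = V_A)
    (C : G →L[ℂ] H) (D : G' →L[ℂ] K)
    (T₂₁ : G →L[ℂ] K) (T₁₂s : G' →L[ℂ] H)
    (hT₂₁ : T₂₁ = A.comp C) (hT₁₂s : T₁₂s = (ContinuousLinearMap.adjoint A).comp D) :
    ∃ (E : G →L[ℂ] H) (F : G' →L[ℂ] H),
      IsReducedSolution V_A T₂₁ E ∧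
      IsReducedSolution (absPow A (1/2)) T₁₂s F ∧
      (ContinuousLinearMap.adjoint F).comp E =
        ((ContinuousLinearMap.adjoint D).comp A).comp C :=
  complementable_implies_weakly_complementable_general A V_A hV₁ hV₂ C D T₂₁ T₁₂s hT₂₁ hT₁₂s
end

section
/- There exist a complex Hilbert space K, a closed subspace M ⊆ K with orthogonal projection P_M, and T ∈ B(K) such that, writing T₂₁ = (1−P_M) T P_M, T₁₂ = P_M T (1−P_M), T₂₂ = (1−P_M) T (1−P_M): range T₂₁ ⊆ range((T₂₂ T₂₂*)^{1/4}) and range(T₁₂*) ⊆ range((T₂₂* T₂₂)^{1/4}), yet there exist no C, D ∈ B(K) with T₂₂ ∘ C = T₂₁ and T₂₂* ∘ D = T₁₂*. -/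
/-!
Work in `ℓ²(ℕ)` with `M = ℂ e₀` and the positive diagonal operator `X = diag(0, 1, 1/2, 1/3, …)`,
which vanishes on `M`. Put `T = |X a⟩⟨e₀| + X²` with `a = (1/n)ₙ ∈ ℓ²`. Then `T₂₂ = X²`,
`T₁₂ = 0` and `T₂₁ = |X a⟩⟨e₀|`, so `(T₂₂T₂₂*)^{1/4} = X` and the range inclusions hold. But
`T₂₂ C = T₂₁` would give `X² (C e₀) = X a = (1/n²)ₙ`, forcing `C e₀` to be the constant sequence
`1` off `e₀`, which is not square-summable.
-/

open scoped ENNReal lp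

namespace lp

section Diagonal

variable {ι 𝕜 : Type*} [NontriviallyNormedField 𝕜] (p : ℝ≥0∞) [Fact (1 ≤ p)]

noncomputable def diagonal (c : ℓ^∞(ι, 𝕜)) : lp (fun _ : ι ↦ 𝕜) p →L[𝕜] lp (fun _ : ι ↦ 𝕜) p :=
  mapCLM p (fun i ↦ c i • ContinuousLinearMap.id 𝕜 𝕜) (norm_nonneg c) fun i ↦
    (norm_smul_le _ _).trans <| (mul_le_of_le_one_right (norm_nonneg _)
      ContinuousLinearMap.norm_id_le).trans (norm_apply_le_norm ENNReal.top_ne_zero c i)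

@[simp]
lemma diagonal_apply (c : ℓ^∞(ι, 𝕜)) (x : lp (fun _ : ι ↦ 𝕜) p) (i : ι) :
    diagonal p c x i = c i * x i := rfl

end Diagonal

section Hilbert

variable {ι 𝕜 : Type*} [RCLike 𝕜]

lemma adjoint_diagonal (c : ℓ^∞(ι, 𝕜)) :
    ContinuousLinearMap.adjoint (diagonal 2 c) = diagonal 2 (star c) := by
  refine ((ContinuousLinearMap.eq_adjoint_iff _ _).mpr fun x y ↦ ?_).symm
  simp only [inner_eq_tsum, diagonal_apply, lp.star_apply, RCLike.star_def, RCLike.inner_apply]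
  exact tsum_congr fun i ↦ by simp only [map_mul, RCLike.conj_conj]; ring

open scoped ComplexOrder in
lemma diagonal_nonneg {c : ℓ^∞(ι, 𝕜)} (hc : ∀ i, 0 ≤ c i) : 0 ≤ diagonal 2 c := by
  have hstar : star c = c := ext <| funext fun i ↦ (IsSelfAdjoint.of_nonneg (hc i)).star_eq
  rw [ContinuousLinearMap.nonneg_iff_isPositive, ContinuousLinearMap.isPositive_def']
  refine ⟨by rw [ContinuousLinearMap.isSelfAdjoint_iff', adjoint_diagonal, hstar], fun x ↦ ?_⟩
  refine (RCLike.hasSum_re 𝕜 (hasSum_inner (diagonal 2 c x) x)).nonneg fun i ↦ ?_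
  rw [diagonal_apply, ← smul_eq_mul, inner_smul_left, inner_self_eq_norm_sq_to_K]
  obtain ⟨r, hr, hri⟩ := RCLike.nonneg_iff_exists_ofReal.mp (hc i)
  rw [← hri]
  simp only [RCLike.conj_ofReal, RCLike.mul_re, RCLike.ofReal_re, RCLike.re_ofReal_pow,
    RCLike.ofReal_im, RCLike.im_ofReal_pow, mul_zero, sub_zero]
  positivity

end Hilbert

end lp

namespace CFC

variable {A : Type*} [CStarAlgebra A] [PartialOrder A] [StarOrderedRing A]

lemma rpow_sq_mul_sq_one_div_four (a : A) (ha : 0 ≤ a := by cfc_tac) :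
    CFC.rpow (a ^ 2 * a ^ 2) (1 / 4) = a := by
  rw [rpow_eq_pow, ← pow_add, ← rpow_natCast a,
    rpow_rpow_of_exponent_nonneg a _ _ (by positivity) (by positivity),
    show ((2 + 2 : ℕ) : ℝ) * (1 / 4) = 1 by norm_num, rpow_one a]

end CFC

lemma memℓp_two_inv_natCast : Memℓp (fun n : ℕ ↦ (n : ℂ)⁻¹) 2 := by
  refine memℓp_gen ?_
  convert Real.summable_nat_pow_inv.mpr one_lt_two using 2 with n
  simp

namespace WeakComplementabilityExample

noncomputable abbrev H : Type := ℓ²(ℕ, ℂ)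

noncomputable def P : H →L[ℂ] H := lp.diagonal 2 (lp.single ∞ 0 1)

noncomputable def X : H →L[ℂ] H :=
  lp.diagonal 2 ⟨_, memℓp_two_inv_natCast.of_exponent_ge le_top⟩

-- Since `(0 : ℂ)⁻¹ = 0`, `X` vanishes on `M = ℂ e₀` and `invNat` lies in `Mᗮ`.
noncomputable def invNat : H := ⟨_, memℓp_two_inv_natCast⟩

noncomputable def T₂₁ : H →L[ℂ] H := (lp.evalCLM ℂ (fun _ ↦ ℂ) 2 0).smulRight (X invNat)

noncomputable def T : H →L[ℂ] H := T₂₁ + X ^ 2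

@[simp] lemma P_apply (x : H) (n : ℕ) : P x n = if n = 0 then x n else 0 := by
  simp [P, lp.single_apply, Pi.single_apply]

@[simp] lemma X_apply (x : H) (n : ℕ) : X x n = (n : ℂ)⁻¹ * x n := rfl

@[simp] lemma T₂₁_apply (x : H) (n : ℕ) : T₂₁ x n = x 0 * ((n : ℂ)⁻¹ * (n : ℂ)⁻¹) := by
  simp [T₂₁, invNat, lp.evalCLM]

lemma isStarProjection_P : IsStarProjection P where
  isIdempotentElem := by
    ext x n
    rcases n with _ | n <;> simp
  isSelfAdjoint := by
    rw [ContinuousLinearMap.isSelfAdjoint_iff', P, lp.adjoint_diagonal]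
    congr 1
    ext n
    rcases n with _ | n <;> simp [lp.single_apply]

lemma compl_comp_T_comp_compl : ((1 - P).comp T).comp (1 - P) = X ^ 2 := by
  ext x n
  rcases n with _ | n <;> simp [T, pow_two]

lemma compl_comp_T_comp_P : ((1 - P).comp T).comp P = T₂₁ := by
  ext x n
  rcases n with _ | n <;> simp [T, pow_two]

lemma P_comp_T_comp_compl : (P.comp T).comp (1 - P) = 0 := by
  ext x n
  rcases n with _ | n <;> simp [T, pow_two]

open scoped ComplexOrder in
lemma X_nonneg : 0 ≤ X :=
  lp.diagonal_nonneg fun n ↦ inv_nonneg.mpr n.cast_nonneg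

lemma isSelfAdjoint_X_sq : IsSelfAdjoint (X ^ 2) :=
  (IsSelfAdjoint.of_nonneg X_nonneg).pow 2

lemma range_T₂₁_subset : Set.range T₂₁ ⊆ Set.range X := by
  rintro _ ⟨x, rfl⟩
  exact ⟨x 0 • invNat, map_smul X _ _⟩

lemma not_exists_sq_comp_eq_T₂₁ : ¬ ∃ C : H →L[ℂ] H, (X ^ 2).comp C = T₂₁ := by
  rintro ⟨C, hC⟩
  set y := C (lp.single 2 0 1)
  have hy : ∀ n ≠ 0, y n = 1 := fun n hn ↦ by
    simpa [pow_two, lp.single_apply, hn] using congr($hC (lp.single 2 0 1) n)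
  have hsq := (lp.memℓp y).summable (by norm_num : 0 < (2 : ℝ≥0∞).toReal)
  have hone : (fun n ↦ ‖y n‖ ^ (2 : ℝ≥0∞).toReal) =ᶠ[Filter.atTop] fun _ ↦ 1 :=
    Filter.eventually_atTop.2 ⟨1, fun n hn ↦ by simp [hy n (by omega)]⟩
  exact one_ne_zero <| tendsto_nhds_unique (tendsto_const_nhds.congr' hone.symm)
    hsq.tendsto_atTop_zero

end WeakComplementabilityExample

open WeakComplementabilityExample

/-- Theorem 6.4: there exist a Hilbert space `K`, a closed subspace `M` (described by its
orthogonal projection `P`) and `T ∈ B(K)` such that `T` is `(M,M)`-weakly complementable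
(the two range inclusions hold) but `T` is not `(M,M)`-complementable (the two systems
`T₂₂ C = T₂₁` and `T₂₂* D = T₁₂*` are not both solvable). -/
theorem exists_weakly_complementable_not_complementable :
    ∃ (K : Type) (_ : NormedAddCommGroup K) (_ : InnerProductSpace ℂ K)
      (_ : CompleteSpace K) (M : Submodule ℂ K) (P : K →L[ℂ] K) (T : K →L[ℂ] K),
      ContinuousLinearMap.adjoint P = P ∧
      (∀ x : K, P x ∈ M) ∧ (∀ x ∈ M, P x = x) ∧
      Set.range (((1 - P).comp T).comp P) ⊆
        Set.range (CFC.rpow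
          ((((1 - P).comp T).comp (1 - P)) *
            star (((1 - P).comp T).comp (1 - P)) : K →L[ℂ] K) (1/4 : ℝ) : K →L[ℂ] K) ∧
      Set.range (ContinuousLinearMap.adjoint ((P.comp T).comp (1 - P))) ⊆
        Set.range (CFC.rpow
          ((star (((1 - P).comp T).comp (1 - P))) *
            (((1 - P).comp T).comp (1 - P)) : K →L[ℂ] K) (1/4 : ℝ) : K →L[ℂ] K) ∧
      ¬∃ (C : K →L[ℂ] K) (D : K →L[ℂ] K),
        (((1 - P).comp T).comp (1 - P)).comp C = ((1 - P).comp T).comp P ∧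
        (star (((1 - P).comp T).comp (1 - P))).comp D =
          ContinuousLinearMap.adjoint ((P.comp T).comp (1 - P)) := by
  refine ⟨H, inferInstance, inferInstance, inferInstance, LinearMap.range (P : H →ₗ[ℂ] H), P, T,
    isStarProjection_P.isSelfAdjoint, fun x ↦ ⟨x, rfl⟩, ?_, ?_, ?_, ?_⟩
  · rintro _ ⟨x, rfl⟩
    exact congr($(isStarProjection_P.isIdempotentElem) x)
  · rw [compl_comp_T_comp_P, compl_comp_T_comp_compl, isSelfAdjoint_X_sq.star_eq,
      CFC.rpow_sq_mul_sq_one_div_four X X_nonneg]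
    exact range_T₂₁_subset
  · rw [P_comp_T_comp_compl, map_zero]
    exact Set.range_subset_iff.2 fun _ ↦ ⟨0, by simp⟩
  · rintro ⟨C, -, hC, -⟩
    rw [compl_comp_T_comp_compl, compl_comp_T_comp_P] at hC
    exact not_exists_sq_comp_eq_T₂₁ ⟨C, hC⟩
end

section
/- Let H be a complex Hilbert space and let X ∈ B(H) be positive and invertible. Then for every Y ∈ B(H), (1 + X)⁻¹ ≤ Y*Y + (1 − Y)* X⁻¹ (1 − Y), and equality holds if and only if Y = (1 + X)⁻¹. -/
/-!
With `j = X⁻¹` and `z = (1 + X)⁻¹` one has `j z = z j = j - z`, and completing the square gives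
`Y* Y + (1 - Y)* j (1 - Y) = z + W* W + W* j W` for `W = Y - z`. Since `j ≥ 0`, the last two
terms are positive, and they vanish exactly when `W = 0` by the C⋆-identity.
-/

theorem Ring.inverse_mul_inverse_one_add {R : Type*} [Ring R] {x : R} (hx : IsUnit x)
    (hx₁ : IsUnit (1 + x)) :
    Ring.inverse x * Ring.inverse (1 + x) = Ring.inverse x - Ring.inverse (1 + x) := by
  simpa using (Ring.inverse_sub_inverse (iff_of_true hx hx₁)).symm

theorem Ring.inverse_one_add_mul_inverse {R : Type*} [Ring R] {x : R} (hx : IsUnit x)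
    (hx₁ : IsUnit (1 + x)) :
    Ring.inverse (1 + x) * Ring.inverse x = Ring.inverse x - Ring.inverse (1 + x) := by
  have h := Ring.inverse_sub_inverse (iff_of_true hx₁ hx)
  rw [sub_add_cancel_right, mul_neg, mul_one, neg_mul, ← neg_sub, neg_inj] at h
  exact h.symm

theorem star_mul_self_add_star_sub_mul_mul_eq {R : Type*} [Ring R] [StarRing R] {j z : R}
    (hz : IsSelfAdjoint z) (hjz : j * z = j - z) (hzj : z * j = j - z) (y : R) :
    star y * y + star (1 - y) * j * (1 - y) =
      z + (star (y - z) * (y - z) + star (y - z) * j * (y - z)) := by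
  rw [star_sub, star_sub, star_one, hz.star_eq]
  have hdiff : z + ((star y - z) * (y - z) + (star y - z) * j * (y - z)) -
      (star y * y + (1 - star y) * j * (1 - y)) =
      (z - star y) * (j * z - (j - z)) + (z * j - (j - z)) * (1 - y) := by
    noncomm_ring
  rw [hjz, hzj, sub_self, mul_zero, zero_mul, add_zero, sub_eq_zero] at hdiff
  exact hdiff.symm

section CStarAlgebra

variable {A : Type*} [CStarAlgebra A] [PartialOrder A] [StarOrderedRing A]

theorem star_mul_self_add_star_mul_mul_nonneg {j : A} (hj : 0 ≤ j) (w : A) :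
    0 ≤ star w * w + star w * j * w :=
  add_nonneg (star_mul_self_nonneg w) (star_left_conjugate_nonneg hj w)

theorem star_mul_self_add_star_mul_mul_eq_zero_iff {j : A} (hj : 0 ≤ j) {w : A} :
    star w * w + star w * j * w = 0 ↔ w = 0 := by
  rw [add_eq_zero_iff_of_nonneg (star_mul_self_nonneg w) (star_left_conjugate_nonneg hj w)]
  constructor
  · exact fun h => (CStarRing.star_mul_self_eq_zero_iff w).mp h.1
  · rintro rfl
    simp

theorem inverse_one_add_le_and_eq_iff {x : A} (hx : 0 ≤ x) (hxu : IsUnit x) (y : A) :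
    Ring.inverse (1 + x) ≤ star y * y + star (1 - y) * Ring.inverse x * (1 - y) ∧
      (Ring.inverse (1 + x) = star y * y + star (1 - y) * Ring.inverse x * (1 - y) ↔
        y = Ring.inverse (1 + x)) := by
  have hxpos : IsStrictlyPositive x := hxu.isStrictlyPositive hx
  have hx₁ : IsStrictlyPositive (1 + x) := isStrictlyPositive_one.add_nonneg hx
  have hj : 0 ≤ Ring.inverse x := hxpos.ringInverse.nonneg
  rw [star_mul_self_add_star_sub_mul_mul_eq hx₁.ringInverse.nonneg.isSelfAdjoint
    (Ring.inverse_mul_inverse_one_add hxu hx₁.isUnit)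
    (Ring.inverse_one_add_mul_inverse hxu hx₁.isUnit), left_eq_add,
    star_mul_self_add_star_mul_mul_eq_zero_iff hj, sub_eq_zero]
  exact ⟨le_add_of_nonneg_right (star_mul_self_add_star_mul_mul_nonneg hj _), .rfl⟩

end CStarAlgebra

/-- Lemma 6.6: for positive definite `X`, `(1 + X)⁻¹ ≤ Y*Y + (1 − Y)* X⁻¹ (1 − Y)` for every
`Y`, with equality iff `Y = (1 + X)⁻¹`. -/
theorem inv_one_add_le_and_eq_iff
    {H : Type*} [NormedAddCommGroup H] [InnerProductSpace ℂ H] [CompleteSpace H]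
    (X : H →L[ℂ] H) (hX : X.IsPositive) (hXu : IsUnit X) :
    ∀ Y : H →L[ℂ] H,
      Ring.inverse (1 + X) ≤ star Y * Y + star (1 - Y) * Ring.inverse X * (1 - Y) ∧
      (Ring.inverse (1 + X) = star Y * Y + star (1 - Y) * Ring.inverse X * (1 - Y) ↔
        Y = Ring.inverse (1 + X)) :=
  inverse_one_add_le_and_eq_iff ((ContinuousLinearMap.nonneg_iff_isPositive X).mpr hX) hXu
end

section
/- Let H be a complex Hilbert space and let A, B ∈ B(H) be positive and invertible. Then for every C ∈ B(H), (A⁻¹ + B⁻¹)⁻¹ ≤ C*AC + (1 − C)*B(1 − C), and equality holds if and only if C = (A + B)⁻¹B. -/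
/-!
With `S = A + B` and `D = C - S⁻¹B`, completing the square gives
`C*AC + (1 - C)*B(1 - C) = B S⁻¹ A + D* S D`, and `B S⁻¹ A = (A⁻¹ + B⁻¹)⁻¹` because
`A⁻¹ + B⁻¹ = A⁻¹ S B⁻¹`. The term `D* S D` is positive, and it vanishes only when
`√S D = 0`, i.e. `D = 0`, since `S` is invertible.
-/

open scoped Ring

theorem Ring.inverse_inverse_add_inverse {R : Type*} [Semiring R] {a b : R}
    (ha : IsUnit a) (hb : IsUnit b) : (a⁻¹ʳ + b⁻¹ʳ)⁻¹ʳ = b * (a + b)⁻¹ʳ * a := by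
  rw [Ring.inverse_add_inverse (iff_of_true ha hb), Ring.inverse_mul (Or.inr hb.ringInverse),
    Ring.inverse_mul (Or.inl ha.ringInverse), Ring.inverse_inverse ha, Ring.inverse_inverse hb,
    mul_assoc]

theorem star_mul_mul_add_star_one_sub_mul_mul_eq {R : Type*} [Ring R] [StarRing R] {a b : R}
    (ha : IsSelfAdjoint a) (hb : IsSelfAdjoint b) (hab : IsUnit (a + b)) (c : R) :
    star c * a * c + star (1 - c) * b * (1 - c) =
      b * (a + b)⁻¹ʳ * a + star (c - (a + b)⁻¹ʳ * b) * (a + b) * (c - (a + b)⁻¹ʳ * b) := by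
  have hs : IsSelfAdjoint (a + b)⁻¹ʳ := (ha.add hb).ringInverse
  have hba : b * (a + b)⁻¹ʳ * a = b - b * (a + b)⁻¹ʳ * b := by
    rw [eq_sub_iff_add_eq, mul_assoc, mul_assoc, ← mul_add, ← mul_add,
      Ring.inverse_mul_cancel _ hab, mul_one]
  rw [star_sub, star_sub, star_mul, hs.star_eq, hb.star_eq, star_one, hba]
  simp only [mul_sub, sub_mul, mul_assoc, Ring.mul_inverse_cancel_left _ _ hab,
    Ring.inverse_mul_cancel_left _ _ hab]
  noncomm_ring

section CStarAlgebra

variable {A : Type*} [CStarAlgebra A] [PartialOrder A] [StarOrderedRing A]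

theorem star_left_conjugate_eq_zero_iff {s : A} (hs : 0 ≤ s) (d : A) :
    star d * s * d = 0 ↔ s * d = 0 := by
  have hsqrt : star (CFC.sqrt s * d) * (CFC.sqrt s * d) = star d * s * d := by
    rw [star_mul, (CFC.sqrt_nonneg s).isSelfAdjoint.star_eq, mul_assoc, ← mul_assoc (CFC.sqrt s),
      CFC.sqrt_mul_sqrt_self s hs, ← mul_assoc]
  constructor
  · intro h
    rw [← hsqrt, CStarRing.star_mul_self_eq_zero_iff] at h
    rw [← CFC.sqrt_mul_sqrt_self s hs, mul_assoc, h, mul_zero]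
  · intro h
    rw [mul_assoc, h, mul_zero]

namespace IsStrictlyPositive

theorem inverse_inverse_add_inverse_le {a b : A} (ha : IsStrictlyPositive a)
    (hb : IsStrictlyPositive b) (c : A) :
    (a⁻¹ʳ + b⁻¹ʳ)⁻¹ʳ ≤ star c * a * c + star (1 - c) * b * (1 - c) := by
  have hs : IsStrictlyPositive (a + b) := ha.add_nonneg hb.nonneg
  rw [star_mul_mul_add_star_one_sub_mul_mul_eq ha.isSelfAdjoint hb.isSelfAdjoint hs.isUnit,
    Ring.inverse_inverse_add_inverse ha.isUnit hb.isUnit]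
  exact le_add_of_nonneg_right (star_left_conjugate_nonneg hs.nonneg _)

theorem inverse_inverse_add_inverse_eq_iff {a b : A} (ha : IsStrictlyPositive a)
    (hb : IsStrictlyPositive b) (c : A) :
    (a⁻¹ʳ + b⁻¹ʳ)⁻¹ʳ = star c * a * c + star (1 - c) * b * (1 - c) ↔ c = (a + b)⁻¹ʳ * b := by
  have hs : IsStrictlyPositive (a + b) := ha.add_nonneg hb.nonneg
  rw [star_mul_mul_add_star_one_sub_mul_mul_eq ha.isSelfAdjoint hb.isSelfAdjoint hs.isUnit,
    Ring.inverse_inverse_add_inverse ha.isUnit hb.isUnit, left_eq_add,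
    star_left_conjugate_eq_zero_iff hs.nonneg, hs.isUnit.mul_right_eq_zero, sub_eq_zero]

end IsStrictlyPositive

end CStarAlgebra

/-- Lemma 6.7: for positive definite `A` and `B`, the parallel sum
`A : B = (A⁻¹ + B⁻¹)⁻¹` satisfies `A : B ≤ C*AC + (1 − C)*B(1 − C)` for every `C`, and
equality holds iff `C = (A + B)⁻¹ B`. -/
theorem parallel_sum_le_and_eq_iff
    {H : Type*} [NormedAddCommGroup H] [InnerProductSpace ℂ H] [CompleteSpace H]
    (A B : H →L[ℂ] H) (hA : A.IsPositive) (hB : B.IsPositive)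
    (hAu : IsUnit A) (hBu : IsUnit B) :
    ∀ C : H →L[ℂ] H,
      Ring.inverse (Ring.inverse A + Ring.inverse B) ≤
        star C * A * C + star (1 - C) * B * (1 - C) ∧
      (Ring.inverse (Ring.inverse A + Ring.inverse B) =
          star C * A * C + star (1 - C) * B * (1 - C) ↔
        C = Ring.inverse (A + B) * B) := by
  have ha : IsStrictlyPositive A := hAu.isStrictlyPositive ((A.nonneg_iff_isPositive).mpr hA)
  have hb : IsStrictlyPositive B := hBu.isStrictlyPositive ((B.nonneg_iff_isPositive).mpr hB)
  exact fun C ↦ ⟨ha.inverse_inverse_add_inverse_le hb C, ha.inverse_inverse_add_inverse_eq_iff hb C⟩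
end

section
/- Let H be a complex Hilbert space and T ∈ B(H) a positive operator. Then for every x ∈ H, the sequence n ↦ (T + (1/n)·1)⁻¹(T x) converges in norm (as n → ∞) to the orthogonal projection of x onto the closure of range T. -/
/-!
Write `R ε = (T + ε)⁻¹`. Positivity makes `T + ε` coercive with constant `ε`, so it is invertible
with `‖ε R ε‖ ≤ 1`. Since `R ε T = 1 - ε R ε`, the vector `ε R ε (T z)` has norm at most `2 ε ‖z‖`;
thus `ε R ε y → 0` on the range of `T`, and by the uniform bound on its closure. Finally, for the
projection `P` onto that closure, `x - P x ∈ (range T)ᗮ = ker T`, so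
`R ε (T x) = R ε (T (P x)) = P x - ε R ε (P x) → P x`.
-/

open Filter Topology
open scoped InnerProductSpace

theorem Ring.inverse_add_smul_one_mul {A : Type*} [Ring A] [Algebra ℝ A] {a : A} {r : ℝ}
    (h : IsUnit (a + r • 1)) :
    Ring.inverse (a + r • 1) * a = 1 - r • Ring.inverse (a + r • 1) := by
  have h := Ring.inverse_mul_cancel _ h
  rw [mul_add, mul_smul_comm, mul_one] at h
  exact eq_sub_of_add_eq h

namespace ContinuousLinearMap

theorem tendsto_apply_zero_of_mem_closure {ι 𝕜 E F : Type*} [NontriviallyNormedField 𝕜]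
    [SeminormedAddCommGroup E] [SeminormedAddCommGroup F] [NormedSpace 𝕜 E] [NormedSpace 𝕜 F]
    {A : ι → E →L[𝕜] F} {l : Filter ι} {C : ℝ} (hA : ∀ᶠ i in l, ‖A i‖ ≤ C) {s : Set E}
    (hs : ∀ y ∈ s, Tendsto (fun i ↦ A i y) l (𝓝 0)) {x : E} (hx : x ∈ closure s) :
    Tendsto (fun i ↦ A i x) l (𝓝 0) := by
  rw [NormedAddGroup.tendsto_nhds_zero]
  intro δ hδ
  obtain ⟨y, hys, hxy⟩ := Metric.mem_closure_iff.mp hx (δ / (2 * (|C| + 1))) (by positivity)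
  rw [dist_eq_norm, lt_div_iff₀ (by positivity)] at hxy
  filter_upwards [hA, NormedAddGroup.tendsto_nhds_zero.mp (hs y hys) (δ / 2) (by positivity)]
    with i hAi hyi
  have hC : ‖A i‖ ≤ |C| + 1 := hAi.trans ((le_abs_self C).trans (lt_add_one _).le)
  calc ‖A i x‖ = ‖A i (x - y) + A i y‖ := by rw [← map_add, sub_add_cancel]
    _ ≤ ‖A i‖ * ‖x - y‖ + ‖A i y‖ := (norm_add_le _ _).trans (by gcongr; exact (A i).le_opNorm _)
    _ ≤ (|C| + 1) * ‖x - y‖ + ‖A i y‖ := by gcongr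
    _ < δ := by linarith

variable {E : Type*} [NormedAddCommGroup E] [InnerProductSpace ℂ E]
  {T : E →L[ℂ] E} {ε : ℝ}

theorem IsPositive.sq_norm_mul_le_norm_inner_add_smul_one (hT : T.IsPositive) (u : E) :
    ‖u‖ ^ 2 * ε ≤ ‖⟪(T + ε • 1) u, u⟫_ℂ‖ := by
  have hre : RCLike.re ⟪(T + ε • 1) u, u⟫_ℂ = RCLike.re ⟪T u, u⟫_ℂ + ε * ‖u‖ ^ 2 := by
    simp only [add_apply, smul_apply, one_apply_eq_self, RCLike.real_smul_eq_coe_smul (K := ℂ),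
      inner_add_left, inner_smul_left, RCLike.conj_ofReal, map_add, RCLike.re_ofReal_mul,
      inner_self_eq_norm_sq]
  calc ‖u‖ ^ 2 * ε ≤ RCLike.re ⟪(T + ε • 1) u, u⟫_ℂ := by
        rw [hre]; nlinarith [hT.re_inner_nonneg_left u]
    _ ≤ ‖⟪(T + ε • 1) u, u⟫_ℂ‖ := RCLike.re_le_norm _

variable [CompleteSpace E]

theorem IsPositive.isUnit_add_smul_one (hT : T.IsPositive) (hε : 0 < ε) : IsUnit (T + ε • 1) :=
  isUnit_of_forall_le_norm_inner_map _ (c := ⟨ε, hε.le⟩) hε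
    hT.sq_norm_mul_le_norm_inner_add_smul_one

theorem IsPositive.inverse_add_smul_one_apply_apply (hT : T.IsPositive) (hε : 0 < ε) (u : E) :
    Ring.inverse (T + ε • 1) (T u) = u - (ε • Ring.inverse (T + ε • 1)) u :=
  congr($(Ring.inverse_add_smul_one_mul (hT.isUnit_add_smul_one hε)) u)

theorem IsPositive.norm_smul_inverse_add_smul_one_le_one (hT : T.IsPositive) (hε : 0 < ε) :
    ‖ε • Ring.inverse (T + ε • 1)‖ ≤ 1 := by
  have hanti : AntilipschitzWith ⟨ε, hε.le⟩⁻¹ ⇑(T + ε • 1 : E →L[ℂ] E) :=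
    antilipschitz_of_forall_le_inner_map _ (c := ⟨ε, hε.le⟩) hε
      hT.sq_norm_mul_le_norm_inner_add_smul_one
  refine opNorm_le_bound _ zero_le_one fun u ↦ ?_
  have hu : (T + ε • 1) (Ring.inverse (T + ε • 1) u) = u :=
    congr($(Ring.mul_inverse_cancel _ (hT.isUnit_add_smul_one hε)) u)
  have := (T + ε • 1).bound_of_antilipschitz hanti (Ring.inverse (T + ε • 1) u)
  rw [hu] at this
  calc ‖(ε • Ring.inverse (T + ε • 1)) u‖ = ε * ‖Ring.inverse (T + ε • 1) u‖ := by
        rw [smul_apply, norm_smul, Real.norm_of_nonneg hε.le]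
    _ ≤ ε * (ε⁻¹ * ‖u‖) := by gcongr; exact this
    _ = 1 * ‖u‖ := by field_simp

theorem IsPositive.tendsto_smul_inverse_add_smul_one_apply_of_mem_closure (hT : T.IsPositive)
    {y : E} (hy : y ∈ closure (Set.range T)) :
    Tendsto (fun ε : ℝ ↦ (ε • Ring.inverse (T + ε • 1)) y) (𝓝[>] 0) (𝓝 0) := by
  refine tendsto_apply_zero_of_mem_closure (C := 1) ?_ ?_ hy
  · filter_upwards [self_mem_nhdsWithin] with ε hε using hT.norm_smul_inverse_add_smul_one_le_one hε
  rintro _ ⟨z, rfl⟩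
  have hbound : ∀ ε > 0, ‖(ε • Ring.inverse (T + ε • 1)) (T z)‖ ≤ ε * (2 * ‖z‖) := fun ε hε ↦
    calc ‖(ε • Ring.inverse (T + ε • 1)) (T z)‖
        = ε * ‖z - (ε • Ring.inverse (T + ε • 1)) z‖ := by
          rw [smul_apply, hT.inverse_add_smul_one_apply_apply hε, norm_smul,
            Real.norm_of_nonneg hε.le]
      _ ≤ ε * (‖z‖ + ‖z‖) := by
          gcongr
          refine (norm_sub_le _ _).trans ?_
          gcongr
          exact (le_opNorm _ z).trans
            (mul_le_of_le_one_left (norm_nonneg z) (hT.norm_smul_inverse_add_smul_one_le_one hε))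
      _ = ε * (2 * ‖z‖) := by ring
  refine squeeze_zero_norm' (eventually_nhdsWithin_of_forall hbound) ?_
  simpa using (tendsto_nhdsWithin_of_tendsto_nhds (tendsto_id (x := 𝓝 (0 : ℝ)))).mul_const
    (2 * ‖z‖)

theorem IsPositive.apply_starProjection_closure_range (hT : T.IsPositive) (x : E) :
    T ((LinearMap.range (T : E →ₗ[ℂ] E)).topologicalClosure.starProjection x) = T x := by
  have hker :=
    (LinearMap.range (T : E →ₗ[ℂ] E)).topologicalClosure.sub_starProjection_mem_orthogonal x
  rw [Submodule.orthogonal_closure, hT.isSymmetric.orthogonal_range, LinearMap.mem_ker, coe_coe,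
    map_sub, sub_eq_zero] at hker
  exact hker.symm

theorem IsPositive.tendsto_inverse_add_smul_one_apply_self (hT : T.IsPositive) (x : E) :
    Tendsto (fun ε : ℝ ↦ Ring.inverse (T + ε • 1) (T x)) (𝓝[>] 0)
      (𝓝 ((LinearMap.range (T : E →ₗ[ℂ] E)).topologicalClosure.starProjection x)) := by
  set p := (LinearMap.range (T : E →ₗ[ℂ] E)).topologicalClosure.starProjection x
  have hp : p ∈ closure (Set.range T) := by
    have := (LinearMap.range (T : E →ₗ[ℂ] E)).topologicalClosure.starProjection_apply_mem x
    rwa [← SetLike.mem_coe, Submodule.topologicalClosure_coe, LinearMap.coe_range, coe_coe] at this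
  have hlim := (hT.tendsto_smul_inverse_add_smul_one_apply_of_mem_closure hp).const_sub p
  rw [sub_zero] at hlim
  refine hlim.congr' (eventually_nhdsWithin_of_forall fun ε hε ↦ ?_)
  show _ = Ring.inverse (T + ε • 1) (T x)
  rw [← hT.apply_starProjection_closure_range x, hT.inverse_add_smul_one_apply_apply hε]

end ContinuousLinearMap

/-- Lemma 6.8 (Hilbert space case): for a positive operator `T`,
`(T + n⁻¹ I)⁻¹ T x → P_{closure (range T)} x` for every `x`. -/
theorem tendsto_inverse_smoothing_to_projection
    {H : Type*} [NormedAddCommGroup H] [InnerProductSpace ℂ H] [CompleteSpace H]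
    (T : H →L[ℂ] H) (hT : T.IsPositive) (x : H) :
    Filter.Tendsto
      (fun n : ℕ => Ring.inverse (T + ((n : ℝ)⁻¹ : ℝ) • (1 : H →L[ℂ] H)) (T x))
      Filter.atTop
      (nhds (letI N := (LinearMap.range (T : H →ₗ[ℂ] H)).topologicalClosure
        haveI : CompleteSpace N :=
          (LinearMap.range (T : H →ₗ[ℂ] H)).isClosed_topologicalClosure.completeSpace_coe
        ((N.orthogonalProjectionOnto x : N) : H))) :=
  (hT.tendsto_inverse_add_smul_one_apply_self x).comp
    (tendsto_inv_atTop_nhdsGT_zero.comp tendsto_natCast_atTop_atTop)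
end

section
/- Let H be a complex Hilbert space and let A, B ∈ B(H) be positive operators with range B ⊆ range(A + B). Let E ∈ B(H) be the reduced solution of (A + B)X = B, i.e. (A + B)E = B and range E ⊆ closure(range(A + B)). Then for every x ∈ H, Re⟨A(Ex), Ex⟩ + Re⟨B(x − Ex), x − Ex⟩ = inf over y ∈ H of ( Re⟨Ay, y⟩ + Re⟨B(x − y), x − y⟩ ). -/
open scoped InnerProductSpace
open RCLike

/-!
Write `y = u + z` with `u = E x`. Expanding both quadratic forms around `u`, the terms linear
in `z` are `2 Re ⟪A u, z⟫ - 2 Re ⟪B (x - u), z⟫`, and they cancel because `(A + B) E = B` says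
exactly `A u = B (x - u)`. What remains is `Re ⟪A z, z⟫ + Re ⟪B z, z⟫ ≥ 0`, so the infimum is
attained at `u`.
-/

section

variable {𝕜 V : Type*} [RCLike 𝕜] [NormedAddCommGroup V] [InnerProductSpace 𝕜 V]

theorem LinearMap.IsSymmetric.re_inner_map_add_add {T : V →ₗ[𝕜] V} (hT : T.IsSymmetric)
    (u z : V) :
    re ⟪T (u + z), u + z⟫_𝕜 = re ⟪T u, u⟫_𝕜 + 2 * re ⟪T u, z⟫_𝕜 + re ⟪T z, z⟫_𝕜 := by
  have hcross : re ⟪T z, u⟫_𝕜 = re ⟪T u, z⟫_𝕜 := by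
    rw [hT z u, ← inner_conj_symm, conj_re]
  simp only [map_add, inner_add_left, inner_add_right, hcross]
  ring

theorem ContinuousLinearMap.isLeast_re_inner_add_re_inner_sub {A B : V →L[𝕜] V}
    (hA : A.IsPositive) (hB : B.IsPositive) {x u : V} (hu : A u = B (x - u)) :
    IsLeast (Set.range fun y => re ⟪A y, y⟫_𝕜 + re ⟪B (x - y), x - y⟫_𝕜)
      (re ⟪A u, u⟫_𝕜 + re ⟪B (x - u), x - u⟫_𝕜) := by
  refine ⟨⟨u, rfl⟩, ?_⟩
  rintro _ ⟨y, rfl⟩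
  obtain ⟨z, rfl⟩ : ∃ z, y = u + z := ⟨y - u, by abel⟩
  have hxy : x - (u + z) = (x - u) + -z := by abel
  have hA' := hA.isSymmetric.re_inner_map_add_add u z
  have hB' := hB.isSymmetric.re_inner_map_add_add (x - u) (-z)
  simp only [ContinuousLinearMap.coe_coe, map_neg, inner_neg_left, inner_neg_right,
    neg_neg] at hA' hB'
  have hcross : re ⟪A u, z⟫_𝕜 = re ⟪B (x - u), z⟫_𝕜 := by rw [hu]
  simp only [hxy]
  linarith [hA.re_inner_nonneg_left z, hB.re_inner_nonneg_left z]

end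

theorem reduced_solution_solves_parallel_sum_equation_general
    {H : Type*} [NormedAddCommGroup H] [InnerProductSpace ℂ H]
    (A B : H →L[ℂ] H) (hA : A.IsPositive) (hB : B.IsPositive)
    (E : H →L[ℂ] H)
    (hE₁ : (A + B).comp E = B) :
    ∀ x : H,
      (⟪A (E x), E x⟫_ℂ).re + (⟪B (x - E x), x - E x⟫_ℂ).re =
        ⨅ y : H, ((⟪A y, y⟫_ℂ).re + (⟪B (x - y), x - y⟫_ℂ).re) := by
  intro x
  have hu : A (E x) = B (x - E x) := by
    rw [map_sub, ← DFunLike.congr_fun hE₁ x]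
    simp
  exact ((ContinuousLinearMap.isLeast_re_inner_add_re_inner_sub hA hB hu).csInf_eq).symm

/-- Theorem 6.9: if `A, B ≥ 0` with `R(B) ⊆ R(A+B)` and `E` is the reduced solution of
`(A+B)X = B`, then `E` solves `A : B = X*AX + (1−X)*B(1−X)`; equivalently, for every `x`
the quadratic form of the parallel sum evaluated via `E` attains the defining infimum. -/
theorem reduced_solution_solves_parallel_sum_equation
    {H : Type*} [NormedAddCommGroup H] [InnerProductSpace ℂ H] [CompleteSpace H]
    (A B : H →L[ℂ] H) (hA : A.IsPositive) (hB : B.IsPositive)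
    (hrange : Set.range B ⊆ Set.range (A + B))
    (E : H →L[ℂ] H)
    (hE₁ : (A + B).comp E = B)
    (hE₂ : Set.range E ⊆ closure (Set.range (A + B))) :
    ∀ x : H,
      (⟪A (E x), E x⟫_ℂ).re + (⟪B (x - E x), x - E x⟫_ℂ).re =
        ⨅ y : H, ((⟪A y, y⟫_ℂ).re + (⟪B (x - y), x - y⟫_ℂ).re) :=
  reduced_solution_solves_parallel_sum_equation_general A B hA hB E hE₁
end
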